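/- (Generalized curvature-dimension inequality.) Suppose there exists ρ ∈ ℝ such that Γ₂^L(g)(p) ≥ ρ·Γ^L(g)(p) for every smooth g : ℝ^k → ℝ and every p ∈ ℝ^k. Then for every smooth f : ℝ^k × ℝ^k → ℝ and every point (p,ξ) ∈ ℝ^k × ℝ^k, Γ₂(f)(p,ξ) ≥ (ρ − C_σ/2)·Γ(f)(p,ξ) − (C_σ/2)·Γ^Z(f)(p,ξ). -/

import Mathlib

noncomputable section

abbrev Ek (k : ℕ) : Type := EuclideanSpace ℝ (Fin k)

/-- Action of a vector field `W` on a function `g`: `(Wg)(x) = ⟨W(x), ∇g(x)⟩ = dg_x(W(x))`. -/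
def vAct {k : ℕ} (W : Ek k → Ek k) (g : Ek k → ℝ) (x : Ek k) : ℝ :=
  fderiv ℝ g x (W x)

/-- The operator `L = ∑ V_i ∘ V_i + V_0`. -/
def opL {k : ℕ} (V₀ : Ek k → Ek k) (V : Fin k → Ek k → Ek k) (g : Ek k → ℝ) (x : Ek k) : ℝ :=
  ∑ i : Fin k, vAct (V i) (vAct (V i) g) x + vAct V₀ g x

/-- Carré du champ of an operator `A`. -/
def carre {X : Type*} (A : (X → ℝ) → X → ℝ) (g h : X → ℝ) (x : X) : ℝ :=
  (1 / 2) * (A (fun y => g y * h y) x - g x * A h x - h x * A g x)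

/-- Iterated carré du champ of an operator `A`. -/
def carre2 {X : Type*} (A : (X → ℝ) → X → ℝ) (g : X → ℝ) (x : X) : ℝ :=
  (1 / 2) * (A (carre A g g) x - 2 * carre A g (A g) x)

/-- Partial derivative `∂f/∂ξ_j` (in the second variable). -/
def dxi {k : ℕ} (j : Fin k) (f : Ek k × Ek k → ℝ) (x : Ek k × Ek k) : ℝ :=
  fderiv ℝ (fun ξ => f (x.1, ξ)) x.2 (EuclideanSpace.single j 1)

/-- The Kolmogorov type operator `𝓛 f(p,ξ) = (L f(·,ξ))(p) + ∑ j σ_j(p) ∂f/∂ξ_j (p,ξ)`. -/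
def opLL {k : ℕ} (V₀ : Ek k → Ek k) (V : Fin k → Ek k → Ek k) (Sg : Ek k → Ek k)
    (f : Ek k × Ek k → ℝ) (x : Ek k × Ek k) : ℝ :=
  opL V₀ V (fun p => f (p, x.2)) x.1 + ∑ j : Fin k, Sg x.1 j * dxi j f x

/-- The bilinear form `Γ^Z(f,h) = ⟨∇_ξ f, ∇_ξ h⟩`. -/
def gamZ {k : ℕ} (f h : Ek k × Ek k → ℝ) (x : Ek k × Ek k) : ℝ :=
  inner ℝ (gradient (fun ξ => f (x.1, ξ)) x.2) (gradient (fun ξ => h (x.1, ξ)) x.2)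

/-- `Γ₂^Z(f) = (1/2)(𝓛(Γ^Z(f)) − 2Γ^Z(f, 𝓛f))`. -/
def gamZ2 {k : ℕ} (V₀ : Ek k → Ek k) (V : Fin k → Ek k → Ek k) (Sg : Ek k → Ek k)
    (f : Ek k × Ek k → ℝ) (x : Ek k × Ek k) : ℝ :=
  (1 / 2) * (opLL V₀ V Sg (gamZ f f) x - 2 * gamZ f (opLL V₀ V Sg f) x)

noncomputable section
namespace CDaux

variable {E : Type*} [NormedAddCommGroup E] [NormedSpace ℝ E]

/-- first order operator along vector field `w` -/
def Dop (w : E → E) (g : E → ℝ) (x : E) : ℝ := fderiv ℝ g x (w x)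

lemma diffAt {F : Type*} [NormedAddCommGroup F] [NormedSpace ℝ F] {f : E → F}
    (hf : ContDiff ℝ (⊤ : ℕ∞) f) (x : E) : DifferentiableAt ℝ f x :=
  (hf.differentiable (by simp)).differentiableAt

lemma contDiff_Dop {w : E → E} {g : E → ℝ} (hw : ContDiff ℝ (⊤ : ℕ∞) w) (hg : ContDiff ℝ (⊤ : ℕ∞) g) :
    ContDiff ℝ (⊤ : ℕ∞) (Dop w g) :=
  (hg.fderiv_right (by simp)).clm_apply hw

lemma Dop_mul {w : E → E} {g h : E → ℝ} (hg : ContDiff ℝ (⊤ : ℕ∞) g) (hh : ContDiff ℝ (⊤ : ℕ∞) h) (x : E) :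
    Dop w (fun y => g y * h y) x = g x * Dop w h x + h x * Dop w g x := by
  unfold Dop
  rw [fderiv_fun_mul (diffAt hg x) (diffAt hh x)]
  simp [mul_comm]

lemma Dop_add {w : E → E} {g h : E → ℝ} (hg : ContDiff ℝ (⊤ : ℕ∞) g) (hh : ContDiff ℝ (⊤ : ℕ∞) h) (x : E) :
    Dop w (fun y => g y + h y) x = Dop w g x + Dop w h x := by
  unfold Dop
  rw [fderiv_fun_add (diffAt hg x) (diffAt hh x)]; rfl

lemma Dop_sum {ι : Type*} (s : Finset ι) {w : E → E} {g : ι → E → ℝ}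
    (hg : ∀ i, ContDiff ℝ (⊤ : ℕ∞) (g i)) (x : E) :
    Dop w (fun y => ∑ i ∈ s, g i y) x = ∑ i ∈ s, Dop w (g i) x := by
  unfold Dop
  rw [fderiv_fun_sum (fun i _ => diffAt (hg i) x)]
  simp

lemma Dop_sq {w : E → E} {g : E → ℝ} (hg : ContDiff ℝ (⊤ : ℕ∞) g) (x : E) :
    Dop w (fun y => g y ^ 2) x = 2 * g x * Dop w g x := by
  have := Dop_mul (w := w) hg hg x
  simp only [← pow_two] at this
  rw [this]; ring

end CDaux

noncomputable section
namespace CDaux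

variable {E : Type*} [NormedAddCommGroup E] [NormedSpace ℝ E]

/-- generic operator: sum of squares of fields + drift + weighted first-order part -/
def genOp {ι κ : Type*} [Fintype ι] [Fintype κ] (w : ι → E → E) (w0 : E → E)
    (c : κ → E → ℝ) (u : κ → E → E) (g : E → ℝ) (x : E) : ℝ :=
  ∑ i, Dop (w i) (Dop (w i) g) x + Dop w0 g x + ∑ j, c j x * Dop (u j) g x

lemma carre_genOp {ι κ : Type*} [Fintype ι] [Fintype κ] {w : ι → E → E} {w0 : E → E}
    {c : κ → E → ℝ} {u : κ → E → E} (hw : ∀ i, ContDiff ℝ (⊤ : ℕ∞) (w i))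
    {g h : E → ℝ} (hg : ContDiff ℝ (⊤ : ℕ∞) g) (hh : ContDiff ℝ (⊤ : ℕ∞) h) (x : E) :
    carre (genOp w w0 c u) g h x = ∑ i, Dop (w i) g x * Dop (w i) h x := by
  have key : ∀ i : ι, Dop (w i) (Dop (w i) (fun y => g y * h y)) x
      = g x * Dop (w i) (Dop (w i) h) x + h x * Dop (w i) (Dop (w i) g) x
        + 2 * (Dop (w i) g x * Dop (w i) h x) := by
    intro i
    have e1 : Dop (w i) (fun y => g y * h y)
        = fun q => g q * Dop (w i) h q + h q * Dop (w i) g q :=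
      funext fun q => Dop_mul hg hh q
    rw [e1, Dop_add (hg.mul (contDiff_Dop (hw i) hh)) (hh.mul (contDiff_Dop (hw i) hg)),
      Dop_mul hg (contDiff_Dop (hw i) hh), Dop_mul hh (contDiff_Dop (hw i) hg)]
    ring
  have e0 : Dop w0 (fun y => g y * h y) x = g x * Dop w0 h x + h x * Dop w0 g x :=
    Dop_mul hg hh x
  have eu : ∀ j : κ, Dop (u j) (fun y => g y * h y) x
      = g x * Dop (u j) h x + h x * Dop (u j) g x := fun j => Dop_mul hg hh x
  have eU : ∑ j : κ, c j x * Dop (u j) (fun y => g y * h y) x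
      = ∑ j : κ, (g x * (c j x * Dop (u j) h x) + h x * (c j x * Dop (u j) g x)) :=
    Finset.sum_congr rfl fun j _ => by rw [eu j]; ring
  unfold carre genOp
  rw [eU, Finset.sum_congr rfl fun i _ => key i, e0]
  simp only [Finset.sum_add_distrib, ← Finset.mul_sum]
  ring

/-- carre only depends on pointwise values of the operator on smooth functions -/
lemma carre_congr {A B : (E → ℝ) → E → ℝ} {g h : E → ℝ}
    (hg : ContDiff ℝ (⊤ : ℕ∞) g) (hh : ContDiff ℝ (⊤ : ℕ∞) h)
    (e : ∀ F : E → ℝ, ContDiff ℝ (⊤ : ℕ∞) F → ∀ y, A F y = B F y) (x : E) :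
    carre A g h x = carre B g h x := by
  unfold carre
  rw [e _ (hg.mul hh) x, e _ hg x, e _ hh x]

end CDaux

noncomputable section
namespace CDaux

variable {k : ℕ}

/-- lift of a vector field on the first factor -/
def lift1 (W : Ek k → Ek k) : Ek k × Ek k → Ek k × Ek k := fun y => (W y.1, 0)

/-- constant vertical field `e_j` -/
def zv (j : Fin k) : Ek k × Ek k → Ek k × Ek k := fun _ => (0, EuclideanSpace.single j 1)

lemma contDiff_lift1 {W : Ek k → Ek k} (hW : ContDiff ℝ (⊤ : ℕ∞) W) : ContDiff ℝ (⊤ : ℕ∞) (lift1 W) :=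
  (hW.comp contDiff_fst).prodMk contDiff_const

lemma contDiff_zv (j : Fin k) : ContDiff ℝ (⊤ : ℕ∞) (zv (k := k) j) := contDiff_const

/-- derivative of a first-variable slice -/
lemma fderiv_slice1 {f : Ek k × Ek k → ℝ} (hf : ContDiff ℝ (⊤ : ℕ∞) f) (q ξ : Ek k) (v : Ek k) :
    fderiv ℝ (fun p => f (p, ξ)) q v = fderiv ℝ f (q, ξ) (v, 0) := by
  have h1 : HasFDerivAt (fun p : Ek k => f (p, ξ))
      ((fderiv ℝ f (q, ξ)).comp (ContinuousLinearMap.inl ℝ (Ek k) (Ek k))) q :=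
    (diffAt hf (q, ξ)).hasFDerivAt.comp q (hasFDerivAt_prodMk_left q ξ)
  rw [h1.fderiv]; rfl

lemma fderiv_slice2 {f : Ek k × Ek k → ℝ} (hf : ContDiff ℝ (⊤ : ℕ∞) f) (q ξ : Ek k) (v : Ek k) :
    fderiv ℝ (fun ζ => f (q, ζ)) ξ v = fderiv ℝ f (q, ξ) (0, v) := by
  have h1 : HasFDerivAt (fun ζ : Ek k => f (q, ζ))
      ((fderiv ℝ f (q, ξ)).comp (ContinuousLinearMap.inr ℝ (Ek k) (Ek k))) ξ :=
    (diffAt hf (q, ξ)).hasFDerivAt.comp ξ (hasFDerivAt_prodMk_right q ξ)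
  rw [h1.fderiv]; rfl

lemma vAct_slice {W : Ek k → Ek k} {f : Ek k × Ek k → ℝ} (hf : ContDiff ℝ (⊤ : ℕ∞) f) (q ξ : Ek k) :
    vAct W (fun p => f (p, ξ)) q = Dop (lift1 W) f (q, ξ) :=
  fderiv_slice1 hf q ξ (W q)

lemma dxi_eq {j : Fin k} {f : Ek k × Ek k → ℝ} (hf : ContDiff ℝ (⊤ : ℕ∞) f) (x : Ek k × Ek k) :
    dxi j f x = Dop (zv j) f x :=
  fderiv_slice2 hf x.1 x.2 (EuclideanSpace.single j 1)

end CDaux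

noncomputable section
namespace CDaux

variable {k : ℕ} {V₀ : Ek k → Ek k} {V : Fin k → Ek k → Ek k} {Sg : Ek k → Ek k}

lemma opL_slice (hV₀ : ContDiff ℝ (⊤ : ℕ∞) V₀) (hV : ∀ i, ContDiff ℝ (⊤ : ℕ∞) (V i))
    {f : Ek k × Ek k → ℝ} (hf : ContDiff ℝ (⊤ : ℕ∞) f) (x : Ek k × Ek k) :
    opL V₀ V (fun p => f (p, x.2)) x.1
      = ∑ i : Fin k, Dop (lift1 (V i)) (Dop (lift1 (V i)) f) x + Dop (lift1 V₀) f x := by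
  unfold opL
  congr 1
  · refine Finset.sum_congr rfl fun i _ => ?_
    have e1 : vAct (V i) (fun p => f (p, x.2)) = fun q => Dop (lift1 (V i)) f (q, x.2) :=
      funext fun q => vAct_slice hf q x.2
    rw [e1]
    exact vAct_slice (contDiff_Dop (contDiff_lift1 (hV i)) hf) x.1 x.2
  · exact vAct_slice hf x.1 x.2

/-- coefficient functions of the vertical part -/
def cf (Sg : Ek k → Ek k) (j : Fin k) : Ek k × Ek k → ℝ := fun y => Sg y.1 j

lemma contDiff_cf (hSg : ContDiff ℝ (⊤ : ℕ∞) Sg) (j : Fin k) : ContDiff ℝ (⊤ : ℕ∞) (cf Sg j) :=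
  (contDiff_euclidean.mp (hSg.comp contDiff_fst)) j

/-- `opLL` agrees with the generic operator on smooth functions -/
lemma opLL_eq (hV₀ : ContDiff ℝ (⊤ : ℕ∞) V₀) (hV : ∀ i, ContDiff ℝ (⊤ : ℕ∞) (V i))
    {f : Ek k × Ek k → ℝ} (hf : ContDiff ℝ (⊤ : ℕ∞) f) (x : Ek k × Ek k) :
    opLL V₀ V Sg f x = genOp (fun i => lift1 (V i)) (lift1 V₀) (cf Sg) zv f x := by
  unfold opLL genOp
  rw [opL_slice hV₀ hV hf x]
  congr 1
  exact Finset.sum_congr rfl fun j _ => by rw [dxi_eq hf]; rfl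

end CDaux

noncomputable section
namespace CDaux

variable {k : ℕ}

lemma fderiv_lift1_vert {W : Ek k → Ek k} (hW : ContDiff ℝ (⊤ : ℕ∞) W) (x : Ek k × Ek k)
    (v : Ek k) : fderiv ℝ (lift1 W) x (0, v) = 0 := by
  have h1 : HasFDerivAt (lift1 W)
      (((fderiv ℝ W x.1).comp (ContinuousLinearMap.fst ℝ (Ek k) (Ek k))).prod 0) x := by
    refine HasFDerivAt.prodMk ?_ (hasFDerivAt_const 0 x)
    exact (diffAt hW x.1).hasFDerivAt.comp x (hasFDerivAt_fst)
  rw [h1.fderiv]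
  simp

/-- commutation of a horizontal field with a constant vertical field -/
lemma Dop_vert_comm {W : Ek k → Ek k} (hW : ContDiff ℝ (⊤ : ℕ∞) W) {f : Ek k × Ek k → ℝ}
    (hf : ContDiff ℝ (⊤ : ℕ∞) f) (j : Fin k) (x : Ek k × Ek k) :
    Dop (zv j) (Dop (lift1 W) f) x = Dop (lift1 W) (Dop (zv j) f) x := by
  set c : Ek k × Ek k := (0, EuclideanSpace.single j 1) with hc
  have hdf : DifferentiableAt ℝ (fderiv ℝ f) x := diffAt (hf.fderiv_right (by simp)) x
  have hsymm : fderiv ℝ (fderiv ℝ f) x c (lift1 W x) = fderiv ℝ (fderiv ℝ f) x (lift1 W x) c :=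
    (hf.contDiffAt.isSymmSndFDerivAt (by rw [minSmoothness_of_isRCLikeNormedField]; exact WithTop.coe_le_coe.mpr (le_top : (2:ℕ∞) ≤ ⊤))) c (lift1 W x)
  have e1 : Dop (zv j) (Dop (lift1 W) f) x
      = fderiv ℝ (fderiv ℝ f) x c (lift1 W x) + fderiv ℝ f x (fderiv ℝ (lift1 W) x c) := by
    unfold Dop
    rw [fderiv_clm_apply hdf (diffAt (contDiff_lift1 hW) x)]
    simp only [zv, ContinuousLinearMap.add_apply, ContinuousLinearMap.comp_apply,
      ContinuousLinearMap.flip_apply]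
    rw [← hc]; ring
  have e2 : Dop (lift1 W) (Dop (zv j) f) x = fderiv ℝ (fderiv ℝ f) x (lift1 W x) c := by
    unfold Dop
    have : (fun y => fderiv ℝ f y ((zv j) y)) = fun y => fderiv ℝ f y c := rfl
    rw [this, fderiv_clm_apply hdf (differentiableAt_const c)]
    simp
  rw [e1, e2, hsymm, fderiv_lift1_vert hW x]
  simp

end CDaux

noncomputable section
namespace CDaux

variable {k : ℕ}

lemma grad_coord (g : Ek k → ℝ) (ξ : Ek k) (j : Fin k) :
    gradient g ξ j = fderiv ℝ g ξ (EuclideanSpace.single j 1) := by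
  have h1 : (inner ℝ (gradient g ξ) (EuclideanSpace.single j (1:ℝ)) : ℝ)
      = fderiv ℝ g ξ (EuclideanSpace.single j 1) := by
    unfold gradient
    exact InnerProductSpace.toDual_symm_apply
  rw [EuclideanSpace.inner_single_right] at h1
  simpa using h1

lemma gamZ_eq (f h : Ek k × Ek k → ℝ) (x : Ek k × Ek k) :
    gamZ f h x = ∑ j : Fin k, dxi j f x * dxi j h x := by
  unfold gamZ dxi
  rw [PiLp.inner_apply]
  refine Finset.sum_congr rfl fun j _ => ?_
  rw [grad_coord, grad_coord]
  simp [mul_comm]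

end CDaux

noncomputable section
namespace CDaux

lemma cs_bound {k : ℕ} (a : Fin k → Fin k → ℝ) (b d : Fin k → ℝ) {C : ℝ}
    (hC : Real.sqrt (∑ i, ∑ j, (a i j)^2) ≤ C) :
    ∑ i, ∑ j, a i j * b i * d j ≤ C/2 * ((∑ i, (b i)^2) + ∑ j, (d j)^2) := by
  have h0 : (0:ℝ) ≤ C := le_trans (Real.sqrt_nonneg _) hC
  have h1 : (0:ℝ) ≤ ∑ i, ∑ j, (a i j)^2 :=
    Finset.sum_nonneg fun i _ => Finset.sum_nonneg fun j _ => sq_nonneg _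
  have hSa : ∑ i, ∑ j, (a i j)^2 ≤ C^2 := by
    calc ∑ i, ∑ j, (a i j)^2 = (Real.sqrt (∑ i, ∑ j, (a i j)^2))^2 := (Real.sq_sqrt h1).symm
    _ ≤ C^2 := pow_le_pow_left₀ (Real.sqrt_nonneg _) hC 2
  have hb0 : (0:ℝ) ≤ ∑ i, (b i)^2 := Finset.sum_nonneg fun i _ => sq_nonneg _
  have hd0 : (0:ℝ) ≤ ∑ j, (d j)^2 := Finset.sum_nonneg fun j _ => sq_nonneg _
  have hcs : (∑ i, ∑ j, a i j * b i * d j)^2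
      ≤ (∑ i, ∑ j, (a i j)^2) * ((∑ i, (b i)^2) * (∑ j, (d j)^2)) := by
    have h2 := Finset.sum_mul_sq_le_sq_mul_sq Finset.univ
      (fun q : Fin k × Fin k => a q.1 q.2) (fun q : Fin k × Fin k => b q.1 * d q.2)
    rw [Fintype.sum_prod_type, Fintype.sum_prod_type, Fintype.sum_prod_type] at h2
    calc (∑ i, ∑ j, a i j * b i * d j)^2
        = (∑ i, ∑ j, a i j * (b i * d j))^2 := by
          congr 1; exact Finset.sum_congr rfl fun i _ => Finset.sum_congr rfl fun j _ => by ring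
      _ ≤ (∑ i, ∑ j, (a i j)^2) * ∑ i, ∑ j, (b i * d j)^2 := h2
      _ = (∑ i, ∑ j, (a i j)^2) * ((∑ i, (b i)^2) * (∑ j, (d j)^2)) := by
          congr 1
          rw [Fintype.sum_mul_sum]
          exact Finset.sum_congr rfl fun i _ => Finset.sum_congr rfl fun j _ => by ring
  have hX2 : (∑ i, ∑ j, a i j * b i * d j)^2 ≤ (C/2 * ((∑ i, (b i)^2) + ∑ j, (d j)^2))^2 := by
    nlinarith [sq_nonneg ((∑ i, (b i)^2) - ∑ j, (d j)^2), mul_nonneg hb0 hd0]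
  have hR0 : (0:ℝ) ≤ C/2 * ((∑ i, (b i)^2) + ∑ j, (d j)^2) := by positivity
  exact le_of_pow_le_pow_left₀ two_ne_zero hR0 hX2

end CDaux

open CDaux in
/-- **Generalized curvature-dimension inequality.** If `Γ₂^L(g) ≥ ρ Γ^L(g)` for all smooth
`g : ℝ^k → ℝ`, then the Kolmogorov type operator `𝓛` satisfies
`Γ₂(f) ≥ (ρ − C_σ/2) Γ(f) − (C_σ/2) Γ^Z(f)` for all smooth `f : ℝ^k × ℝ^k → ℝ`. -/
theorem generalized_curvature_dimension (k : ℕ) (hk : 1 ≤ k)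
    (V₀ : Ek k → Ek k) (V : Fin k → Ek k → Ek k)
    (hV₀ : ContDiff ℝ (⊤ : ℕ∞) V₀) (hV : ∀ i, ContDiff ℝ (⊤ : ℕ∞) (V i))
    (Sg : Ek k → Ek k) (hSg : ContDiff ℝ (⊤ : ℕ∞) Sg)
    (Cσ : ℝ) (hCσ : ∀ p : Ek k,
      Real.sqrt (∑ i : Fin k, ∑ j : Fin k, (vAct (V i) (fun p' => Sg p' j) p) ^ 2) ≤ Cσ)
    (ρ : ℝ) (hρ : ∀ g : Ek k → ℝ, ContDiff ℝ (⊤ : ℕ∞) g → ∀ p : Ek k,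
      ρ * carre (opL V₀ V) g g p ≤ carre2 (opL V₀ V) g p)
    (f : Ek k × Ek k → ℝ) (hf : ContDiff ℝ (⊤ : ℕ∞) f) (p ξ : Ek k) :
    (ρ - Cσ / 2) * carre (opLL V₀ V Sg) f f (p, ξ) - Cσ / 2 * gamZ f f (p, ξ) ≤
      carre2 (opLL V₀ V Sg) f (p, ξ) := by
  
  classical
  have hvi : ∀ i, ContDiff ℝ (⊤ : ℕ∞) (lift1 (V i) : Ek k × Ek k → Ek k × Ek k) :=
    fun i => contDiff_lift1 (hV i)
  have hg : ContDiff ℝ (⊤ : ℕ∞) (fun p' => f (p', ξ)) := hf.comp (contDiff_id.prodMk contDiff_const)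
  have EQ : ∀ F : Ek k × Ek k → ℝ, ContDiff ℝ (⊤ : ℕ∞) F → ∀ y, opLL V₀ V Sg F y
      = genOp (fun i => lift1 (V i)) (lift1 V₀) (cf Sg) zv F y :=
    fun F hF y => opLL_eq hV₀ hV hF y
  have EQb : ∀ G : Ek k → ℝ, ContDiff ℝ (⊤ : ℕ∞) G → ∀ q, opL V₀ V G q
      = genOp V V₀ (fun (_ : Fin 0) _ => (0:ℝ)) (fun _ _ => 0) G q := by
    intro G hG q
    simp only [genOp, Finset.univ_eq_empty, Finset.sum_empty, add_zero]
    rfl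
  have hDf : ∀ i, ContDiff ℝ (⊤ : ℕ∞) (Dop (lift1 (V i)) f) := fun i => contDiff_Dop (hvi i) hf
  set Gfun : Ek k × Ek k → ℝ := fun y => ∑ i, (Dop (lift1 (V i)) f y)^2 with hGdef
  have hGfun : ContDiff ℝ (⊤ : ℕ∞) Gfun := ContDiff.sum fun i _ => (hDf i).pow 2
  set Lf : Ek k × Ek k → ℝ :=
    fun y => ∑ i, Dop (lift1 (V i)) (Dop (lift1 (V i)) f) y + Dop (lift1 V₀) f y with hLdef
  have hLf : ContDiff ℝ (⊤ : ℕ∞) Lf :=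
    (ContDiff.sum fun i _ => contDiff_Dop (hvi i) (hDf i)).add
      (contDiff_Dop (contDiff_lift1 hV₀) hf)
  set Zf : Ek k × Ek k → ℝ := fun y => ∑ j, cf Sg j y * Dop (zv j) f y with hZdef
  have hcfD : ∀ j : Fin k, ContDiff ℝ (⊤ : ℕ∞) (fun y => cf Sg j y * Dop (zv j) f y) :=
    fun j => (contDiff_cf hSg j).mul (contDiff_Dop (contDiff_zv j) hf)
  have hZf : ContDiff ℝ (⊤ : ℕ∞) Zf := ContDiff.sum fun j _ => hcfD j
  -- carré du champ identifications
  have carre_base : ∀ (G H : Ek k → ℝ), ContDiff ℝ (⊤ : ℕ∞) G → ContDiff ℝ (⊤ : ℕ∞) H → ∀ q,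
      carre (opL V₀ V) G H q = ∑ i, Dop (V i) G q * Dop (V i) H q := by
    intro G H hG hH q
    rw [carre_congr hG hH EQb q]
    exact carre_genOp hV hG hH q
  have hcarre : ∀ y, carre (opLL V₀ V Sg) f f y = Gfun y := by
    intro y
    rw [carre_congr hf hf EQ y, carre_genOp hvi hf hf y, hGdef]
    exact Finset.sum_congr rfl fun i _ => (pow_two _).symm
  have slice_b : ∀ (i : Fin k) (q : Ek k),
      Dop (V i) (fun p' => f (p', ξ)) q = Dop (lift1 (V i)) f (q, ξ) :=
    fun i q => vAct_slice hf q ξ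
  -- base carre2 expansion
  have e2 : carre (opL V₀ V) (fun p' => f (p', ξ)) (fun p' => f (p', ξ))
      = fun q => Gfun (q, ξ) := by
    funext q
    rw [carre_base _ _ hg hg q, hGdef]
    exact Finset.sum_congr rfl fun i _ => by rw [slice_b i q, ← pow_two]
  have e4 : opL V₀ V (fun p' => f (p', ξ)) = fun q => Lf (q, ξ) := by
    funext q
    exact opL_slice hV₀ hV hf (q, ξ)
  have e3 : opL V₀ V (fun q => Gfun (q, ξ)) p
      = ∑ i, Dop (lift1 (V i)) (Dop (lift1 (V i)) Gfun) (p, ξ) + Dop (lift1 V₀) Gfun (p, ξ) :=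
    opL_slice hV₀ hV hGfun (p, ξ)
  have hLfs : ContDiff ℝ (⊤ : ℕ∞) (fun q => Lf (q, ξ)) := hLf.comp (contDiff_id.prodMk contDiff_const)
  have e5 : carre (opL V₀ V) (fun p' => f (p', ξ)) (fun q => Lf (q, ξ)) p
      = ∑ i, Dop (lift1 (V i)) f (p, ξ) * Dop (lift1 (V i)) Lf (p, ξ) := by
    rw [carre_base _ _ hg hLfs p]
    refine Finset.sum_congr rfl fun i _ => ?_
    rw [slice_b i p,
      show Dop (V i) (fun q => Lf (q, ξ)) p = Dop (lift1 (V i)) Lf (p, ξ) from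
        vAct_slice hLf p ξ]
  have ebase : carre2 (opL V₀ V) (fun p' => f (p', ξ)) p
      = (1/2) * ((∑ i, Dop (lift1 (V i)) (Dop (lift1 (V i)) Gfun) (p, ξ)
            + Dop (lift1 V₀) Gfun (p, ξ))
        - 2 * ∑ i, Dop (lift1 (V i)) f (p, ξ) * Dop (lift1 (V i)) Lf (p, ξ)) := by
    unfold carre2
    rw [e2, e4, e3, e5]
  -- product-space carre2 expansion
  have hLLsum : ContDiff ℝ (⊤ : ℕ∞) (fun y => Lf y + Zf y) := hLf.add hZf
  have eLL : carre2 (opLL V₀ V Sg) f (p, ξ)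
      = (1/2) * ((∑ i, Dop (lift1 (V i)) (Dop (lift1 (V i)) Gfun) (p, ξ)
            + Dop (lift1 V₀) Gfun (p, ξ)
            + ∑ j, cf Sg j (p, ξ) * Dop (zv j) Gfun (p, ξ))
        - 2 * ∑ i, Dop (lift1 (V i)) f (p, ξ) * Dop (lift1 (V i)) (fun y => Lf y + Zf y) (p, ξ)) := by
    unfold carre2
    have hc : carre (opLL V₀ V Sg) f f = Gfun := funext hcarre
    have hLLf : opLL V₀ V Sg f = fun y => Lf y + Zf y := by
      funext y
      rw [EQ f hf y]
      simp only [genOp, hLdef, hZdef]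
    rw [hc, hLLf, EQ Gfun hGfun (p, ξ),
      carre_congr hf hLLsum EQ (p, ξ), carre_genOp hvi hf hLLsum (p, ξ)]
    rfl
  -- vertical derivative of Gfun
  have eZG : ∀ j : Fin k, Dop (zv j) Gfun (p, ξ)
      = ∑ i, 2 * Dop (lift1 (V i)) f (p, ξ)
          * Dop (lift1 (V i)) (Dop (zv j) f) (p, ξ) := by
    intro j
    rw [hGdef, Dop_sum Finset.univ (fun i => (hDf i).pow 2)]
    refine Finset.sum_congr rfl fun i _ => ?_
    rw [Dop_sq (hDf i), Dop_vert_comm (hV i) hf j]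
  have eZf : ∀ i : Fin k, Dop (lift1 (V i)) Zf (p, ξ)
      = ∑ j, (cf Sg j (p, ξ) * Dop (lift1 (V i)) (Dop (zv j) f) (p, ξ)
          + Dop (zv j) f (p, ξ) * Dop (lift1 (V i)) (cf Sg j) (p, ξ)) := by
    intro i
    rw [hZdef, Dop_sum Finset.univ hcfD]
    refine Finset.sum_congr rfl fun j _ => ?_
    rw [Dop_mul (contDiff_cf hSg j) (contDiff_Dop (contDiff_zv j) hf) (p, ξ)]
  -- the combination identity
  have combine : carre2 (opLL V₀ V Sg) f (p, ξ)
      = carre2 (opL V₀ V) (fun p' => f (p', ξ)) p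
        - ∑ i, ∑ j, Dop (lift1 (V i)) (cf Sg j) (p, ξ)
            * Dop (lift1 (V i)) f (p, ξ) * Dop (zv j) f (p, ξ) := by
    rw [eLL, ebase]
    have eDs : ∀ i : Fin k, Dop (lift1 (V i)) (fun y => Lf y + Zf y) (p, ξ)
        = Dop (lift1 (V i)) Lf (p, ξ) + Dop (lift1 (V i)) Zf (p, ξ) :=
      fun i => Dop_add hLf hZf (p, ξ)
    simp only [eDs, mul_add, Finset.sum_add_distrib]
    have hA1 : ∑ j, cf Sg j (p, ξ) * Dop (zv j) Gfun (p, ξ)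
        = 2 * ∑ i, ∑ j, Dop (lift1 (V i)) f (p, ξ) * (cf Sg j (p, ξ)
            * Dop (lift1 (V i)) (Dop (zv j) f) (p, ξ)) := by
      rw [Finset.mul_sum]
      rw [show ∑ j, cf Sg j (p, ξ) * Dop (zv j) Gfun (p, ξ)
          = ∑ j, ∑ i, 2 * (Dop (lift1 (V i)) f (p, ξ) * (cf Sg j (p, ξ)
              * Dop (lift1 (V i)) (Dop (zv j) f) (p, ξ))) from
        Finset.sum_congr rfl fun j _ => by
          rw [eZG j, Finset.mul_sum]
          exact Finset.sum_congr rfl fun i _ => by ring]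
      rw [Finset.sum_comm]
      simp only [Finset.mul_sum]
    have hA2 : ∑ i, Dop (lift1 (V i)) f (p, ξ) * Dop (lift1 (V i)) Zf (p, ξ)
        = (∑ i, ∑ j, Dop (lift1 (V i)) f (p, ξ) * (cf Sg j (p, ξ)
            * Dop (lift1 (V i)) (Dop (zv j) f) (p, ξ)))
          + ∑ i, ∑ j, Dop (lift1 (V i)) (cf Sg j) (p, ξ)
            * Dop (lift1 (V i)) f (p, ξ) * Dop (zv j) f (p, ξ) := by
      rw [← Finset.sum_add_distrib]
      refine Finset.sum_congr rfl fun i _ => ?_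
      rw [eZf i, Finset.mul_sum, ← Finset.sum_add_distrib]
      refine Finset.sum_congr rfl fun j _ => by ring
    rw [hA1, hA2]
    ring
  -- lower bound from the base curvature-dimension condition
  have hbase := hρ (fun p' => f (p', ξ)) hg p
  have hgamL : carre (opL V₀ V) (fun p' => f (p', ξ)) (fun p' => f (p', ξ)) p
      = Gfun (p, ξ) := by rw [e2]
  have hgam : carre (opLL V₀ V Sg) f f (p, ξ) = Gfun (p, ξ) := hcarre (p, ξ)
  -- gamZ identification
  have hgZ : gamZ f f (p, ξ) = ∑ j, (Dop (zv j) f (p, ξ))^2 := by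
    rw [gamZ_eq]
    exact Finset.sum_congr rfl fun j _ => by
      rw [show dxi j f (p, ξ) = Dop (zv j) f (p, ξ) from dxi_eq hf (p, ξ), ← pow_two]
  -- Cauchy-Schwarz bound on the error term
  have hab : ∀ (i j : Fin k), Dop (lift1 (V i)) (cf Sg j) (p, ξ)
      = vAct (V i) (fun p' => Sg p' j) p :=
    fun i j => (vAct_slice (contDiff_cf hSg j) p ξ).symm
  have hCS : ∑ i, ∑ j, Dop (lift1 (V i)) (cf Sg j) (p, ξ)
        * Dop (lift1 (V i)) f (p, ξ) * Dop (zv j) f (p, ξ)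
      ≤ Cσ/2 * ((∑ i, (Dop (lift1 (V i)) f (p, ξ))^2) + ∑ j, (Dop (zv j) f (p, ξ))^2) := by
    refine cs_bound _ _ _ ?_
    have : ∑ i, ∑ j, (Dop (lift1 (V i)) (cf Sg j) (p, ξ))^2
        = ∑ i, ∑ j, (vAct (V i) (fun p' => Sg p' j) p)^2 :=
      Finset.sum_congr rfl fun i _ => Finset.sum_congr rfl fun j _ => by rw [hab i j]
    rw [this]
    exact hCσ p
  have hGpt : Gfun (p, ξ) = ∑ i, (Dop (lift1 (V i)) f (p, ξ))^2 := by rw [hGdef]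
  rw [combine, hgam, hgZ, hGpt]
  rw [hgamL, hGpt] at hbase
  linarith [hbase, hCS]
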